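/- Let V(t) = F̄₁(t)·[ℓ(F̄₁(t))]^{1/κ_U}, where F̄₁ is a survival function satisfying F̄₁(t + m(t)x) ~ F̄₁(t)e^{−x} locally uniformly, m is self-neglecting, ℓ is slowly varying at 0, and κ_U > 0. Then V(t + m(t)x) ~ V(t)e^{−x} as t → ∞, locally uniformly in x ∈ ℝ; that is, V ∈ Γ_{−1}(m). -/

import Mathlib

/-!
Write `g t x = F̄₁(t + m(t)x) / F̄₁(t)`, so that
`V(t + m(t)x) / V(t) = g t x · (ℓ(F̄₁(t) · g t x) / ℓ(F̄₁(t)))^{1/κ}`.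
On a compact `K`, `g t → e^{-x}` uniformly, so for large `t` every `g t` maps `K` into one fixed
compact subset of `(0, ∞)`. Since `F̄₁(t) → 0⁺`, the locally uniform slow variation of `ℓ` then
makes the second factor tend to `1` uniformly on `K`, and the product tends to `e^{-x}`.
-/

open Filter Topology Set Metric

section UniformConvergence

variable {ι α : Type*} {p : Filter ι} {s : Set α}

theorem tendstoUniformlyOn_iff_tendsto_sub {G : Type*} [AddGroup G] [UniformSpace G]
    [IsUniformAddGroup G] {F : ι → α → G} {f : α → G} :
    TendstoUniformlyOn F f p s ↔
      Tendsto (fun q : ι × α => F q.1 q.2 - f q.2) (p ×ˢ 𝓟 s) (𝓝 0) := by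
  rw [tendstoUniformlyOn_iff_tendsto, uniformity_eq_comap_nhds_zero, tendsto_comap_iff]
  rfl

theorem ContinuousAt.comp_tendstoUniformlyOn_const {β γ : Type*} [UniformSpace β]
    [UniformSpace γ] {φ : β → γ} {c : β} (hφ : ContinuousAt φ c) {F : ι → α → β}
    (hF : TendstoUniformlyOn F (fun _ => c) p s) :
    TendstoUniformlyOn (fun n x => φ (F n x)) (fun _ => φ c) p s :=
  tendsto_prod_principal_iff.mp (hφ.tendsto.comp (tendsto_prod_principal_iff.mpr hF))

theorem TendstoUniformlyOn.comp_tendsto_of_eventually_mapsTo {ι' β γ : Type*}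
    [UniformSpace γ] {q : Filter ι'} {L : Set β} {F : ι' → β → γ} {c : γ}
    (hF : TendstoUniformlyOn F (fun _ => c) q L) {u : ι → ι'} (hu : Tendsto u p q)
    {g : ι → α → β} (hg : ∀ᶠ n in p, MapsTo (g n) s L) :
    TendstoUniformlyOn (fun n x => F (u n) (g n x)) (fun _ => c) p s := fun U hU => by
  filter_upwards [hu.eventually (hF U hU), hg] with n hFn hgn x hx
  exact hFn _ (hgn hx)

theorem TendstoUniformlyOn.exists_isCompact_eventually_mapsTo {E : Type*}
    [PseudoMetricSpace E] [ProperSpace E] {F : ι → α → E} {f : α → E}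
    (hF : TendstoUniformlyOn F f p s) (hs : IsCompact (f '' s)) {U : Set E} (hU : IsOpen U)
    (hfU : MapsTo f s U) : ∃ L, IsCompact L ∧ L ⊆ U ∧ ∀ᶠ n in p, MapsTo (F n) s L := by
  obtain ⟨δ, hδ, hδU⟩ := hs.exists_cthickening_subset_open hU hfU.image_subset
  refine ⟨cthickening δ (f '' s), hs.cthickening, hδU, ?_⟩
  filter_upwards [Metric.tendstoUniformlyOn_iff.mp hF δ hδ] with n hn x hx
  exact mem_cthickening_of_dist_le _ (f x) _ _ (mem_image_of_mem f hx)
    (by rw [dist_comm]; exact (hn x hx).le)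

theorem TendstoUniformlyOn.mul_of_tendstoUniformlyOn_one {R : Type*} [SeminormedRing R]
    {F G : ι → α → R} {f : α → R} (hF : TendstoUniformlyOn F f p s)
    (hf : ∃ C, ∀ x ∈ s, ‖f x‖ ≤ C) (hG : TendstoUniformlyOn G (fun _ => 1) p s) :
    TendstoUniformlyOn (fun n x => F n x * G n x) f p s := by
  obtain ⟨C, hC⟩ := hf
  rw [tendstoUniformlyOn_iff_tendsto_sub] at hF ⊢
  have hG' : Tendsto (fun q : ι × α => G q.1 q.2) (p ×ˢ 𝓟 s) (𝓝 1) :=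
    tendsto_prod_principal_iff.mpr hG
  have hf_bdd : IsBoundedUnder (· ≤ ·) (p ×ˢ 𝓟 s) (fun q : ι × α => ‖f q.2‖) :=
    isBoundedUnder_of_eventually_le (tendsto_snd.eventually (eventually_principal.mpr hC))
  have hfirst : Tendsto (fun q : ι × α => (F q.1 q.2 - f q.2) * G q.1 q.2) (p ×ˢ 𝓟 s) (𝓝 0) := by
    simpa using hF.mul hG'
  have hsecond : Tendsto (fun q : ι × α => f q.2 * (G q.1 q.2 - 1)) (p ×ˢ 𝓟 s) (𝓝 0) :=
    isBoundedUnder_le_mul_tendsto_zero hf_bdd (by simpa using hG'.sub_const 1)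
  simpa only [add_zero] using (hfirst.add hsecond).congr fun q => by noncomm_ring

end UniformConvergence

theorem rapid_variation_stmt10_general (Fbar ℓ m : ℝ → ℝ) (κ : ℝ)
    (hF_pos : ∀ t, 0 < Fbar t)
    (hF0 : Tendsto Fbar atTop (𝓝 0))
    (hℓ_pos : ∀ u > 0, 0 < ℓ u)
    (hℓ : ∀ K : Set ℝ, IsCompact K → K ⊆ Set.Ioi 0 →
      TendstoUniformlyOn (fun u s => ℓ (u * s) / ℓ u) (fun _ => 1) (𝓝[>] (0:ℝ)) K)
    (hFbar : ∀ K : Set ℝ, IsCompact K →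
      TendstoUniformlyOn (fun t x => Fbar (t + m t * x) / Fbar t)
        (fun x => Real.exp (-x)) atTop K) :
    ∀ K : Set ℝ, IsCompact K →
      TendstoUniformlyOn
        (fun t x => (Fbar (t + m t * x) * ℓ (Fbar (t + m t * x)) ^ (1/κ)) /
          (Fbar t * ℓ (Fbar t) ^ (1/κ)))
        (fun x => Real.exp (-x)) atTop K := by
  intro K hK
  have hexp : ContinuousOn (fun x : ℝ => Real.exp (-x)) K := by fun_prop
  have hratio := hFbar K hK
  obtain ⟨L, hL, hL_pos, hratio_L⟩ := hratio.exists_isCompact_eventually_mapsTo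
    (hK.image_of_continuousOn hexp) isOpen_Ioi fun x _ => Real.exp_pos (-x)
  have hF_right : Tendsto Fbar atTop (𝓝[>] 0) :=
    tendsto_nhdsWithin_iff.mpr ⟨hF0, .of_forall hF_pos⟩
  have hℓ_ratio : TendstoUniformlyOn (fun t x => ℓ (Fbar (t + m t * x)) / ℓ (Fbar t))
      (fun _ => 1) atTop K :=
    ((hℓ L hL hL_pos).comp_tendsto_of_eventually_mapsTo hF_right hratio_L).congr <|
      .of_forall fun t x _ => by simp only [mul_div_cancel₀ _ (hF_pos t).ne']
  have hℓ_pow := ContinuousAt.comp_tendstoUniformlyOn_const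
    (Real.continuousAt_rpow_const 1 (1 / κ) (.inl one_ne_zero)) hℓ_ratio
  rw [Real.one_rpow] at hℓ_pow
  refine (hratio.mul_of_tendstoUniformlyOn_one (hK.exists_bound_of_continuousOn hexp)
    hℓ_pow).congr <| .of_forall fun t x _ => ?_
  dsimp only
  rw [mul_div_mul_comm, Real.div_rpow (hℓ_pos _ (hF_pos _)).le (hℓ_pos _ (hF_pos _)).le]

/-- If `V(t) = F̄₁(t) [ℓ(F̄₁(t))]^{1/κ}` with `F̄₁(t + m(t)x) ~ F̄₁(t) e^{-x}` locally
uniformly, `m` self-neglecting and `ℓ` slowly varying at `0` (locally uniformly), then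
`V(t + m(t)x) ~ V(t) e^{-x}` locally uniformly in `x`; that is, `V ∈ Γ_{-1}(m)`. -/
theorem rapid_variation_stmt10 (Fbar ℓ m : ℝ → ℝ) (κ : ℝ) (hκ : 0 < κ)
    (hF_pos : ∀ t, 0 < Fbar t) (hF_le : ∀ t, Fbar t ≤ 1)
    (hF_cont : Continuous Fbar)
    (hF0 : Tendsto Fbar atTop (𝓝 0))
    (hℓ_pos : ∀ u > 0, 0 < ℓ u)
    (hℓ : ∀ K : Set ℝ, IsCompact K → K ⊆ Set.Ioi 0 →
      TendstoUniformlyOn (fun u s => ℓ (u * s) / ℓ u) (fun _ => 1) (𝓝[>] (0:ℝ)) K)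
    (hm_pos : ∀ t, 0 < m t)
    (hm_sn : ∀ K : Set ℝ, IsCompact K →
      TendstoUniformlyOn (fun t x => m (t + m t * x) / m t) (fun _ => 1) atTop K)
    (hFbar : ∀ K : Set ℝ, IsCompact K →
      TendstoUniformlyOn (fun t x => Fbar (t + m t * x) / Fbar t)
        (fun x => Real.exp (-x)) atTop K) :
    ∀ K : Set ℝ, IsCompact K →
      TendstoUniformlyOn
        (fun t x => (Fbar (t + m t * x) * ℓ (Fbar (t + m t * x)) ^ (1/κ)) /
          (Fbar t * ℓ (Fbar t) ^ (1/κ)))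
        (fun x => Real.exp (-x)) atTop K :=
  rapid_variation_stmt10_general Fbar ℓ m κ hF_pos hF0 hℓ_pos hℓ hFbar
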